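/- Let F be a field and L a 6-dimensional nilpotent Lie algebra over F with dim ⁅L,L⁆ = 1. Then L admits a basis e₁, …, e₆ realizing one of the following two bracket tables (all unlisted brackets of pairs of basis elements are zero): (1) ⁅e₁,e₂⁆ = e₆ (H(2,1) ⊕ F(3)); (2) ⁅e₁,e₂⁆ = e₆, ⁅e₃,e₄⁆ = e₆ (H(2,2) ⊕ F(1)). -/

import Mathlib

open Module


/-- `b` realizes the bracket table `t`: for `i < j`, `⁅b i, b j⁆` equals `b k` when
`t i j = some k`, and `0` when `t i j = none`. -/
def Basis.RealizesLieTable {F L : Type*} [Field F] [LieRing L] [LieAlgebra F L] {n : ℕ}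
    (b : Module.Basis (Fin n) F L) (t : ℕ → ℕ → Option (Fin n)) : Prop :=
  ∀ i j : Fin n, i < j → ⁅b i, b j⁆ = (t i.val j.val).elim (0 : L) b

/-- A 6-dimensional nilpotent Lie algebra with one-dimensional derived subalgebra is
`H(2,1) ⊕ F(3)` or `H(2,2) ⊕ F(1)`. -/
theorem dim_six_nilpotent_derived_dim_one
    (F : Type*) (L : Type*) [Field F] [LieRing L] [LieAlgebra F L]
    [FiniteDimensional F L]
    (hnil : LieRing.IsNilpotent L)
    (hdim : Module.finrank F L = 6)
    (h1 : Module.finrank F (LieAlgebra.derivedSeries F L 1) = 1) :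
    ∃ b : Module.Basis (Fin 6) F L,
      Basis.RealizesLieTable b (fun i j =>
        match i, j with
        | 0, 1 => some 5
        | _, _ => none) ∨
      Basis.RealizesLieTable b (fun i j =>
        match i, j with
        | 0, 1 => some 5
        | 2, 3 => some 5
        | _, _ => none) := by
  set D := LieAlgebra.derivedSeries F L 1 with hD
  -- a nonzero element of D spanning it
  have hnt : Nontrivial ↥D := by
    apply Module.nontrivial_of_finrank_pos (R := F); omega
  obtain ⟨zD, hzD⟩ := exists_ne (0 : ↥D)
  have hspan : ∀ w : ↥D, ∃ c : F, c • zD = w :=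
    (finrank_eq_one_iff_of_nonzero' zD hzD).mp h1
  set z : L := (zD : L) with hz
  have hz0 : z ≠ 0 := by simp only [hz, ne_eq, ZeroMemClass.coe_eq_zero]; exact hzD
  have hzmem : z ∈ D := zD.2
  have hmem : ∀ x y : L, ⁅x, y⁆ ∈ D := by
    intro x y
    rw [hD, LieAlgebra.derivedSeries_def, LieAlgebra.derivedSeriesOfIdeal_succ,
      LieAlgebra.derivedSeriesOfIdeal_zero]
    exact LieSubmodule.lie_mem_lie (LieSubmodule.mem_top x) (LieSubmodule.mem_top y)
  have hDspan : ∀ w ∈ D, ∃ c : F, w = c • z := by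
    intro w hw
    obtain ⟨c, hc⟩ := hspan ⟨w, hw⟩
    exact ⟨c, by simpa using (congrArg Subtype.val hc).symm⟩
  -- z is central
  have hcen : ∀ x : L, ⁅x, z⁆ = 0 := by
    intro x
    by_contra hne
    obtain ⟨c, hc⟩ := hDspan ⁅x, z⁆ (D.lie_mem hzmem)
    have hc0 : c ≠ 0 := by rintro rfl; simp at hc; exact hne hc
    have key : ∀ k, z ∈ LieModule.lowerCentralSeries F L L k := by
      intro k
      induction k with
      | zero => exact LieSubmodule.mem_top z
      | succ k ih =>
        rw [LieModule.lowerCentralSeries_succ]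
        have : ⁅x, z⁆ ∈ ⁅(⊤ : LieIdeal F L), LieModule.lowerCentralSeries F L L k⁆ :=
          LieSubmodule.lie_mem_lie (LieSubmodule.mem_top x) ih
        have : c • z ∈ ⁅(⊤ : LieIdeal F L), LieModule.lowerCentralSeries F L L k⁆ := hc ▸ this
        rw [← LieSubmodule.mem_toSubmodule] at this ⊢
        have := Submodule.smul_mem _ c⁻¹ this
        rwa [smul_smul, inv_mul_cancel₀ hc0, one_smul] at this
    obtain ⟨k, hk⟩ := (LieModule.isNilpotent_iff F L L).mp hnil
    have := key k
    rw [hk] at this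
    exact hz0 (by simpa using this)
  -- existence of a nonzero bracket
  have hex : ∃ u v : L, ⁅u, v⁆ ≠ 0 := by
    by_contra hno
    push_neg at hno
    have hbot : D = ⊥ := by
      rw [hD, LieAlgebra.derivedSeries_def, LieAlgebra.derivedSeriesOfIdeal_succ,
        LieAlgebra.derivedSeriesOfIdeal_zero, LieSubmodule.lie_eq_bot_iff]
      intro x _ m _; exact hno x m
    rw [hbot] at hzmem
    exact hz0 (by simpa using hzmem)
  obtain ⟨u, v, huv⟩ := hex
  obtain ⟨c, hcuv⟩ := hDspan ⁅u, v⁆ (hmem u v)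
  have hcne : c ≠ 0 := by rintro rfl; rw [zero_smul] at hcuv; exact huv hcuv
  set e₁ : L := c⁻¹ • u with he₁
  set e₂ : L := v with he₂
  have h12 : ⁅e₁, e₂⁆ = z := by
    rw [he₁, smul_lie, hcuv, smul_smul, inv_mul_cancel₀ hcne, one_smul]
  have h21 : ⁅e₂, e₁⁆ = -z := by rw [← lie_skew, h12]
  -- the linear map pairing against e₁, e₂
  set DM : Submodule F L := (D : Submodule F L) with hDM
  have hfD : Module.finrank F ↥DM = 1 := h1
  set ψ : L →ₗ[F] ↥DM × ↥DM :=
    LinearMap.prod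
      (LinearMap.codRestrict DM (LieAlgebra.ad F L e₁) (fun x => hmem e₁ x))
      (LinearMap.codRestrict DM (LieAlgebra.ad F L e₂) (fun x => hmem e₂ x)) with hψ
  have hψ1 : ∀ x : L, ((ψ x).1 : L) = ⁅e₁, x⁆ := fun x => rfl
  have hψ2 : ∀ x : L, ((ψ x).2 : L) = ⁅e₂, x⁆ := fun x => rfl
  have hψsurj : Function.Surjective ψ := by
    rintro ⟨d1, d2⟩
    obtain ⟨a, ha⟩ := hDspan (d1 : L) d1.2
    obtain ⟨b, hb⟩ := hDspan (d2 : L) d2.2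
    refine ⟨a • e₂ - b • e₁, ?_⟩
    refine Prod.ext (Subtype.ext ?_) (Subtype.ext ?_)
    · rw [hψ1]
      rw [lie_sub, lie_smul, lie_smul, h12, lie_self, smul_zero, sub_zero, ha]
    · rw [hψ2]
      rw [lie_sub, lie_smul, lie_smul, lie_self, smul_zero, h21, smul_neg, zero_sub,
        neg_neg, hb]
  set W : Submodule F L := LinearMap.ker ψ with hW
  have hWmem : ∀ x ∈ W, ⁅e₁, x⁆ = 0 ∧ ⁅e₂, x⁆ = 0 := by
    intro x hx
    rw [hW, LinearMap.mem_ker] at hx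
    constructor
    · rw [← hψ1 x, hx]; rfl
    · rw [← hψ2 x, hx]; rfl
  have hWmem' : ∀ x ∈ W, ∀ y ∈ W, ⁅e₁, x⁆ = 0 → True := fun _ _ _ _ _ => trivial
  have hmemW : ∀ x : L, ⁅e₁, x⁆ = 0 → ⁅e₂, x⁆ = 0 → x ∈ W := by
    intro x hx1 hx2
    rw [hW, LinearMap.mem_ker]
    refine Prod.ext (Subtype.ext ?_) (Subtype.ext ?_)
    · rw [hψ1, hx1]; rfl
    · rw [hψ2, hx2]; rfl
  have hzW : z ∈ W := hmemW z (hcen e₁) (hcen e₂)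
  have hWrank : Module.finrank F ↥W = 4 := by
    have h5 := LinearMap.finrank_range_add_finrank_ker ψ
    rw [LinearMap.range_eq_top.mpr hψsurj] at h5
    rw [finrank_top] at h5
    rw [Module.finrank_prod] at h5
    rw [hfD] at h5
    rw [hdim] at h5
    rw [← hW] at h5
    omega
  classical
  -- helper to pick vectors outside spans
  have hpick : ∀ (U : Submodule F L) (s : Finset L), (↑s : Set L) ⊆ U →
      s.card < Module.finrank F ↥U → ∃ x, x ∈ U ∧ x ∉ Submodule.span F (↑s : Set L) := by
    intro U s hsub hcard
    by_contra h'
    push_neg at h'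
    have hle : U ≤ Submodule.span F (↑s : Set L) := h'
    have h2 : Module.finrank F ↥U ≤ Module.finrank F ↥(Submodule.span F (↑s : Set L)) :=
      Submodule.finrank_mono hle
    have h3 := finrank_span_finset_le_card (R := F) s
    rw [Set.finrank] at h3
    omega
  by_cases hab : ∀ x ∈ W, ∀ y ∈ W, ⁅x, y⁆ = (0 : L)
  · -- Case A : abelian on W
    obtain ⟨e₃, he₃W, he₃⟩ := hpick W {z} (by simp [hzW]) (by rw [hWrank]; simp)
    obtain ⟨e₄, he₄W, he₄⟩ := hpick W {z, e₃} (by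
        rw [Finset.coe_insert, Finset.coe_singleton, Set.insert_subset_iff]
        exact ⟨hzW, by simpa using he₃W⟩)
      (by rw [hWrank]; exact lt_of_le_of_lt (Finset.card_insert_le _ _) (by simp))
    obtain ⟨e₅, he₅W, he₅⟩ := hpick W {z, e₃, e₄} (by
        rw [Finset.coe_insert, Finset.coe_insert, Finset.coe_singleton,
          Set.insert_subset_iff, Set.insert_subset_iff]
        exact ⟨hzW, he₃W, by simpa using he₄W⟩)
      (by
        rw [hWrank]
        refine lt_of_le_of_lt (Finset.card_insert_le _ _) ?_
        have := Finset.card_insert_le e₃ ({e₄} : Finset L)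
        simp only [Finset.card_singleton] at this
        omega)
    set g : Fin 6 → L := ![e₁, e₂, e₃, e₄, e₅, z] with hg
    have hli : LinearIndependent F g := by
      rw [Fintype.linearIndependent_iff]
      intro cf hcf
      rw [Fin.sum_univ_six] at hcf
      have hgv : g 0 = e₁ ∧ g 1 = e₂ ∧ g 2 = e₃ ∧ g 3 = e₄ ∧ g 4 = e₅ ∧ g 5 = z :=
        ⟨rfl, rfl, rfl, rfl, rfl, rfl⟩
      obtain ⟨hg0, hg1, hg2, hg3, hg4, hg5⟩ := hgv
      rw [hg0, hg1, hg2, hg3, hg4, hg5] at hcf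
      have h0 : cf 0 = 0 := by
        have h2 := congrArg (fun y => ⁅e₂, y⁆) hcf
        simp only [lie_add, lie_smul, lie_zero, lie_self, h21, (hWmem e₃ he₃W).2,
          (hWmem e₄ he₄W).2, (hWmem e₅ he₅W).2, hcen e₂, smul_zero, add_zero, smul_neg] at h2
        rw [neg_eq_zero, smul_eq_zero] at h2
        exact h2.resolve_right hz0
      have h1' : cf 1 = 0 := by
        have h2 := congrArg (fun y => ⁅e₁, y⁆) hcf
        simp only [lie_add, lie_smul, lie_zero, lie_self, h12, (hWmem e₃ he₃W).1,
          (hWmem e₄ he₄W).1, (hWmem e₅ he₅W).1, hcen e₁, smul_zero, add_zero, zero_add] at h2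
        rw [smul_eq_zero] at h2
        exact h2.resolve_right hz0
      rw [h0, h1', zero_smul, zero_smul, zero_add, zero_add] at hcf
      have h4 : cf 4 = 0 := by
        by_contra h4
        apply he₅
        have hmemS : cf 2 • e₃ + cf 3 • e₄ + cf 5 • z ∈
            Submodule.span F (↑({z, e₃, e₄} : Finset L) : Set L) := by
          refine Submodule.add_mem _ (Submodule.add_mem _ ?_ ?_) ?_ <;>
            exact Submodule.smul_mem _ _ (Submodule.subset_span (by simp))
        have he5eq : e₅ = (cf 4)⁻¹ • (-(cf 2 • e₃ + cf 3 • e₄ + cf 5 • z)) := by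
          rw [eq_inv_smul_iff₀ h4]
          linear_combination (norm := module) hcf
        rw [he5eq]
        exact Submodule.smul_mem _ _ (Submodule.neg_mem _ hmemS)
      rw [h4, zero_smul, add_zero] at hcf
      have h3 : cf 3 = 0 := by
        by_contra h3
        apply he₄
        have hmemS : cf 2 • e₃ + cf 5 • z ∈
            Submodule.span F (↑({z, e₃} : Finset L) : Set L) := by
          refine Submodule.add_mem _ ?_ ?_ <;>
            exact Submodule.smul_mem _ _ (Submodule.subset_span (by simp))
        have heq : e₄ = (cf 3)⁻¹ • (-(cf 2 • e₃ + cf 5 • z)) := by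
          rw [eq_inv_smul_iff₀ h3]
          linear_combination (norm := module) hcf
        rw [heq]
        exact Submodule.smul_mem _ _ (Submodule.neg_mem _ hmemS)
      rw [h3, zero_smul, add_zero] at hcf
      have h2' : cf 2 = 0 := by
        by_contra h2
        apply he₃
        have hmemS : cf 5 • z ∈ Submodule.span F (↑({z} : Finset L) : Set L) :=
          Submodule.smul_mem _ _ (Submodule.subset_span (by simp))
        have heq : e₃ = (cf 2)⁻¹ • (-(cf 5 • z)) := by
          rw [eq_inv_smul_iff₀ h2]
          linear_combination (norm := module) hcf
        rw [heq]
        exact Submodule.smul_mem _ _ (Submodule.neg_mem _ hmemS)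
      rw [h2', zero_smul, zero_add] at hcf
      have h5 : cf 5 = 0 := by
        rw [smul_eq_zero] at hcf
        exact hcf.resolve_right hz0
      intro i
      fin_cases i <;> assumption
    have hcard : Fintype.card (Fin 6) = Module.finrank F L := by rw [hdim]; simp
    refine ⟨basisOfLinearIndependentOfCardEqFinrank hli hcard, Or.inl ?_⟩
    have hb : ⇑(basisOfLinearIndependentOfCardEqFinrank hli hcard) = g :=
      coe_basisOfLinearIndependentOfCardEqFinrank hli hcard
    intro i j hij
    rw [hb]
    fin_cases i <;> fin_cases j <;>
      first
        | exact absurd hij (by decide)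
        | exact h12
        | exact hcen _
        | exact (hWmem _ he₃W).1
        | exact (hWmem _ he₄W).1
        | exact (hWmem _ he₅W).1
        | exact (hWmem _ he₃W).2
        | exact (hWmem _ he₄W).2
        | exact (hWmem _ he₅W).2
        | exact hab _ he₃W _ he₄W
        | exact hab _ he₃W _ he₅W
        | exact hab _ he₄W _ he₅W
  · -- Case B : a nonzero bracket inside W
    push_neg at hab
    obtain ⟨u', hu'W, v', hv'W, huv'⟩ := hab
    obtain ⟨c', hc'⟩ := hDspan ⁅u', v'⁆ (hmem u' v')
    have hc'ne : c' ≠ 0 := by rintro rfl; rw [zero_smul] at hc'; exact huv' hc'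
    set e₃ : L := c'⁻¹ • u' with he₃
    set e₄ : L := v' with he₄
    have he₃W : e₃ ∈ W := Submodule.smul_mem _ _ hu'W
    have he₄W : e₄ ∈ W := hv'W
    have h34 : ⁅e₃, e₄⁆ = z := by
      rw [he₃, smul_lie, hc', smul_smul, inv_mul_cancel₀ hc'ne, one_smul]
    have h43 : ⁅e₄, e₃⁆ = -z := by rw [← lie_skew, h34]
    set ψ₂ : L →ₗ[F] ↥DM × ↥DM :=
      LinearMap.prod
        (LinearMap.codRestrict DM (LieAlgebra.ad F L e₃) (fun x => hmem e₃ x))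
        (LinearMap.codRestrict DM (LieAlgebra.ad F L e₄) (fun x => hmem e₄ x)) with hψ₂
    have hψ₂1 : ∀ x : L, ((ψ₂ x).1 : L) = ⁅e₃, x⁆ := fun x => rfl
    have hψ₂2 : ∀ x : L, ((ψ₂ x).2 : L) = ⁅e₄, x⁆ := fun x => rfl
    set χ : L →ₗ[F] (↥DM × ↥DM) × (↥DM × ↥DM) := LinearMap.prod ψ ψ₂ with hχ
    have hχsurj : Function.Surjective χ := by
      rintro ⟨⟨d1, d2⟩, ⟨d3, d4⟩⟩
      obtain ⟨a, ha⟩ := hDspan (d1 : L) d1.2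
      obtain ⟨b, hb⟩ := hDspan (d2 : L) d2.2
      obtain ⟨a', ha'⟩ := hDspan (d3 : L) d3.2
      obtain ⟨b', hb'⟩ := hDspan (d4 : L) d4.2
      refine ⟨a • e₂ - b • e₁ + (a' • e₄ - b' • e₃), ?_⟩
      have hWsum : a' • e₄ - b' • e₃ ∈ W :=
        Submodule.sub_mem _ (Submodule.smul_mem _ _ he₄W) (Submodule.smul_mem _ _ he₃W)
      have h12W := hWmem _ hWsum
      have h31 : ⁅e₃, e₁⁆ = 0 := by rw [← lie_skew, (hWmem _ he₃W).1, neg_zero]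
      have h32 : ⁅e₃, e₂⁆ = 0 := by rw [← lie_skew, (hWmem _ he₃W).2, neg_zero]
      have h41 : ⁅e₄, e₁⁆ = 0 := by rw [← lie_skew, (hWmem _ he₄W).1, neg_zero]
      have h42 : ⁅e₄, e₂⁆ = 0 := by rw [← lie_skew, (hWmem _ he₄W).2, neg_zero]
      have h3W : ⁅e₃, a • e₂ - b • e₁⁆ = 0 := by
        rw [lie_sub, lie_smul, lie_smul, h32, h31]; simp
      have h4W : ⁅e₄, a • e₂ - b • e₁⁆ = 0 := by
        rw [lie_sub, lie_smul, lie_smul, h42, h41]; simp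
      refine Prod.ext (Prod.ext (Subtype.ext ?_) (Subtype.ext ?_))
        (Prod.ext (Subtype.ext ?_) (Subtype.ext ?_))
      · show ⁅e₁, _⁆ = (d1 : L)
        rw [lie_add, h12W.1, add_zero, lie_sub, lie_smul, lie_smul, h12, lie_self,
          smul_zero, sub_zero, ha]
      · show ⁅e₂, _⁆ = (d2 : L)
        rw [lie_add, h12W.2, add_zero, lie_sub, lie_smul, lie_smul, lie_self, smul_zero,
          h21, smul_neg, zero_sub, neg_neg, hb]
      · show ⁅e₃, _⁆ = (d3 : L)
        rw [lie_add, h3W, zero_add, lie_sub, lie_smul, lie_smul, h34, lie_self,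
          smul_zero, sub_zero, ha']
      · show ⁅e₄, _⁆ = (d4 : L)
        rw [lie_add, h4W, zero_add, lie_sub, lie_smul, lie_smul, lie_self, smul_zero,
          h43, smul_neg, zero_sub, neg_neg, hb']
    set K : Submodule F L := LinearMap.ker χ with hK
    have hKmem : ∀ x ∈ K, ⁅e₁, x⁆ = 0 ∧ ⁅e₂, x⁆ = 0 ∧ ⁅e₃, x⁆ = 0 ∧ ⁅e₄, x⁆ = 0 := by
      intro x hx
      rw [hK, LinearMap.mem_ker] at hx
      have hx1 : ψ x = 0 := congrArg Prod.fst hx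
      have hx2 : ψ₂ x = 0 := congrArg Prod.snd hx
      refine ⟨?_, ?_, ?_, ?_⟩
      · rw [← hψ1 x, hx1]; rfl
      · rw [← hψ2 x, hx1]; rfl
      · rw [← hψ₂1 x, hx2]; rfl
      · rw [← hψ₂2 x, hx2]; rfl
    have hmemK : ∀ x : L, ⁅e₁, x⁆ = 0 → ⁅e₂, x⁆ = 0 → ⁅e₃, x⁆ = 0 → ⁅e₄, x⁆ = 0 → x ∈ K := by
      intro x hx1 hx2 hx3 hx4
      rw [hK, LinearMap.mem_ker]
      refine Prod.ext (Prod.ext (Subtype.ext ?_) (Subtype.ext ?_))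
        (Prod.ext (Subtype.ext ?_) (Subtype.ext ?_))
      · show ⁅e₁, x⁆ = ((0 : (↥DM × ↥DM) × (↥DM × ↥DM)).1.1 : L); exact hx1
      · show ⁅e₂, x⁆ = ((0 : (↥DM × ↥DM) × (↥DM × ↥DM)).1.2 : L); exact hx2
      · show ⁅e₃, x⁆ = ((0 : (↥DM × ↥DM) × (↥DM × ↥DM)).2.1 : L); exact hx3
      · show ⁅e₄, x⁆ = ((0 : (↥DM × ↥DM) × (↥DM × ↥DM)).2.2 : L); exact hx4
    have hzK : z ∈ K := hmemK z (hcen e₁) (hcen e₂) (hcen e₃) (hcen e₄)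
    have hKW : K ≤ W := by
      intro x hx
      obtain ⟨hx1, hx2, -, -⟩ := hKmem x hx
      exact hmemW x hx1 hx2
    have hKrank : Module.finrank F ↥K = 2 := by
      have h5 := LinearMap.finrank_range_add_finrank_ker χ
      rw [LinearMap.range_eq_top.mpr hχsurj] at h5
      rw [finrank_top] at h5
      rw [Module.finrank_prod] at h5
      rw [Module.finrank_prod] at h5
      rw [hfD] at h5
      rw [hdim] at h5
      rw [← hK] at h5
      omega
    obtain ⟨e₅, he₅K, he₅⟩ := hpick K {z} (by simp [hzK]) (by rw [hKrank]; simp)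
    have he₅W : e₅ ∈ W := hKW he₅K
    obtain ⟨-, -, h3e5, h4e5⟩ := hKmem e₅ he₅K
    set g : Fin 6 → L := ![e₁, e₂, e₃, e₄, e₅, z] with hg
    have hli : LinearIndependent F g := by
      rw [Fintype.linearIndependent_iff]
      intro cf hcf
      rw [Fin.sum_univ_six] at hcf
      have hgv : g 0 = e₁ ∧ g 1 = e₂ ∧ g 2 = e₃ ∧ g 3 = e₄ ∧ g 4 = e₅ ∧ g 5 = z :=
        ⟨rfl, rfl, rfl, rfl, rfl, rfl⟩
      obtain ⟨hg0, hg1, hg2, hg3, hg4, hg5⟩ := hgv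
      rw [hg0, hg1, hg2, hg3, hg4, hg5] at hcf
      have h0 : cf 0 = 0 := by
        have h2 := congrArg (fun y => ⁅e₂, y⁆) hcf
        simp only [lie_add, lie_smul, lie_zero, lie_self, h21, (hWmem e₃ he₃W).2,
          (hWmem e₄ he₄W).2, (hWmem e₅ he₅W).2, hcen e₂, smul_zero, add_zero, smul_neg] at h2
        rw [neg_eq_zero, smul_eq_zero] at h2
        exact h2.resolve_right hz0
      have h1' : cf 1 = 0 := by
        have h2 := congrArg (fun y => ⁅e₁, y⁆) hcf
        simp only [lie_add, lie_smul, lie_zero, lie_self, h12, (hWmem e₃ he₃W).1,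
          (hWmem e₄ he₄W).1, (hWmem e₅ he₅W).1, hcen e₁, smul_zero, add_zero, zero_add] at h2
        rw [smul_eq_zero] at h2
        exact h2.resolve_right hz0
      rw [h0, h1', zero_smul, zero_smul, zero_add, zero_add] at hcf
      have h2' : cf 2 = 0 := by
        have h2 := congrArg (fun y => ⁅e₄, y⁆) hcf
        simp only [lie_add, lie_smul, lie_zero, lie_self, h43, h4e5, hcen e₄,
          smul_zero, add_zero, smul_neg] at h2
        rw [neg_eq_zero, smul_eq_zero] at h2
        exact h2.resolve_right hz0
      have h3' : cf 3 = 0 := by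
        have h2 := congrArg (fun y => ⁅e₃, y⁆) hcf
        simp only [lie_add, lie_smul, lie_zero, lie_self, h34, h3e5, hcen e₃,
          smul_zero, add_zero, zero_add] at h2
        rw [smul_eq_zero] at h2
        exact h2.resolve_right hz0
      rw [h2', h3', zero_smul, zero_smul, zero_add, zero_add] at hcf
      have h4 : cf 4 = 0 := by
        by_contra h4
        apply he₅
        have hmemS : cf 5 • z ∈ Submodule.span F (↑({z} : Finset L) : Set L) :=
          Submodule.smul_mem _ _ (Submodule.subset_span (by simp))
        have heq : e₅ = (cf 4)⁻¹ • (-(cf 5 • z)) := by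
          rw [eq_inv_smul_iff₀ h4]
          linear_combination (norm := module) hcf
        rw [heq]
        exact Submodule.smul_mem _ _ (Submodule.neg_mem _ hmemS)
      rw [h4, zero_smul, zero_add] at hcf
      have h5 : cf 5 = 0 := by
        rw [smul_eq_zero] at hcf
        exact hcf.resolve_right hz0
      intro i
      fin_cases i <;> assumption
    have hcard : Fintype.card (Fin 6) = Module.finrank F L := by rw [hdim]; simp
    refine ⟨basisOfLinearIndependentOfCardEqFinrank hli hcard, Or.inr ?_⟩
    have hb : ⇑(basisOfLinearIndependentOfCardEqFinrank hli hcard) = g :=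
      coe_basisOfLinearIndependentOfCardEqFinrank hli hcard
    intro i j hij
    rw [hb]
    fin_cases i <;> fin_cases j <;>
      first
        | exact absurd hij (by decide)
        | exact h12
        | exact h34
        | exact hcen _
        | exact (hWmem _ he₃W).1
        | exact (hWmem _ he₄W).1
        | exact (hWmem _ he₅W).1
        | exact (hWmem _ he₃W).2
        | exact (hWmem _ he₄W).2
        | exact (hWmem _ he₅W).2
        | exact h3e5
        | exact h4e5
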